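/- arXiv:1112.0349 — 3 statements merged into one kernel-verified Lean document; each statement's English description precedes it below -/
import Mathlib

section
/- Suppose E and F are analytic equivalence relations on standard Borel spaces X and Y respectively, and suppose E classwise Borel embeds into F and F classwise Borel embeds into E. Then E and F are classwise Borel isomorphic. -/
open MeasureTheory

/-- `f` is a reduction of `E` to `F`. -/
def IsReduction {X Y : Type*} (f : X → Y) (E : X → X → Prop) (F : Y → Y → Prop) : Prop :=
  ∀ x x', E x x' ↔ F (f x) (f x')

/-- Borel reducibility `E ≤_B F`. -/
def BorelReducible {X Y : Type*} [MeasurableSpace X] [MeasurableSpace Y]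
    (E : X → X → Prop) (F : Y → Y → Prop) : Prop :=
  ∃ f : X → Y, Measurable f ∧ IsReduction f E F

/-- Borel bireducibility `E ∼_B F`. -/
def BorelBireducible {X Y : Type*} [MeasurableSpace X] [MeasurableSpace Y]
    (E : X → X → Prop) (F : Y → Y → Prop) : Prop :=
  BorelReducible E F ∧ BorelReducible F E

/-- `B` is invariant (saturated) for the relation `F`. -/
def Invariant {Y : Type*} (F : Y → Y → Prop) (B : Set Y) : Prop :=
  ∀ y y', F y y' → y ∈ B → y' ∈ B

/-- The `F`-saturation of a set `S`. -/
def Saturation {Y : Type*} (F : Y → Y → Prop) (S : Set Y) : Set Y :=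
  {y | ∃ s ∈ S, F s y}

/-- Classwise Borel isomorphism `E ≃_cB F`: Borel reductions in both directions whose
factorings to the quotient spaces are mutually inverse bijections. -/
def ClasswiseBorelIso {X Y : Type*} [MeasurableSpace X] [MeasurableSpace Y]
    (E : X → X → Prop) (F : Y → Y → Prop) : Prop :=
  ∃ (φ : X → Y) (ψ : Y → X), Measurable φ ∧ Measurable ψ ∧
    IsReduction φ E F ∧ IsReduction ψ F E ∧
    (∀ x, E x (ψ (φ x))) ∧ (∀ y, F y (φ (ψ y)))

/-- Classwise Borel embeddability `E ⊑_cB F`: `E` is classwise Borel isomorphic to the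
restriction of `F` to some Borel `F`-invariant set `B`. -/
def ClasswiseBorelEmbed {X Y : Type*} [MeasurableSpace X] [MeasurableSpace Y]
    (E : X → X → Prop) (F : Y → Y → Prop) : Prop :=
  ∃ B : Set Y, MeasurableSet B ∧ Invariant F B ∧
    ∃ (φ : X → Y) (ψ : Y → X), Measurable φ ∧ Measurable ψ ∧
      (∀ x, φ x ∈ B) ∧ IsReduction φ E F ∧
      (∀ y ∈ B, ∀ y' ∈ B, (F y y' ↔ E (ψ y) (ψ y'))) ∧
      (∀ x, E x (ψ (φ x))) ∧ (∀ y ∈ B, F y (φ (ψ y)))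

/-- Schröder–Bernstein for classwise Borel embeddability: if `E ⊑_cB F` and
`F ⊑_cB E` then `E ≃_cB F`. -/
theorem stmt_0 {X Y : Type*}
    [TopologicalSpace X] [PolishSpace X] [MeasurableSpace X] [BorelSpace X]
    [TopologicalSpace Y] [PolishSpace Y] [MeasurableSpace Y] [BorelSpace Y]
    (E : X → X → Prop) (F : Y → Y → Prop)
    (hE : Equivalence E) (hF : Equivalence F)
    (hEa : AnalyticSet {p : X × X | E p.1 p.2})
    (hFa : AnalyticSet {p : Y × Y | F p.1 p.2})
    (h₁ : ClasswiseBorelEmbed E F) (h₂ : ClasswiseBorelEmbed F E) :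
    ClasswiseBorelIso E F := by
  classical
  obtain ⟨B, hBm, hBinv, φ₁, ψ₁, mφ₁, mψ₁, hφ₁B, rφ₁, rψ₁, k₁, k₁'⟩ := h₁
  obtain ⟨A, hAm, hAinv, φ₂, ψ₂, mφ₂, mψ₂, hφ₂A, rφ₂, rψ₂, k₂, k₂'⟩ := h₂
  -- the iterated "ancestor" sets
  let C : ℕ → Set X := fun n =>
    Nat.rec Aᶜ (fun _ Cn => {x | x ∈ A ∧ ψ₂ x ∈ B ∧ ψ₁ (ψ₂ x) ∈ Cn}) n
  have hC0 : C 0 = Aᶜ := rfl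
  have hCs : ∀ n, C (n + 1) = {x | x ∈ A ∧ ψ₂ x ∈ B ∧ ψ₁ (ψ₂ x) ∈ C n} := fun _ => rfl
  have hCm : ∀ n, MeasurableSet (C n) := by
    intro n
    induction n with
    | zero => exact hAm.compl
    | succ n ih =>
        have : C (n + 1) = A ∩ (ψ₂ ⁻¹' B) ∩ ((ψ₁ ∘ ψ₂) ⁻¹' C n) := by
          ext x; simp only [hCs, Set.mem_setOf_eq, Set.mem_inter_iff,
            Set.mem_preimage, Function.comp_apply]; tauto
        rw [this]
        exact (hAm.inter (mψ₂ hBm)).inter ((mψ₁.comp mψ₂) ih)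
  have hCinv : ∀ n, Invariant E (C n) := by
    intro n
    induction n with
    | zero =>
        intro x x' hxx' hx hx'A
        exact hx (hAinv x' x (hE.symm hxx') hx'A)
    | succ n ih =>
        rintro x x' hxx' ⟨hxA, hxB, hxC⟩
        have hx'A : x' ∈ A := hAinv x x' hxx' hxA
        have hFψ : F (ψ₂ x) (ψ₂ x') := (rψ₂ x hxA x' hx'A).mp hxx'
        have hx'B : ψ₂ x' ∈ B := hBinv _ _ hFψ hxB
        exact ⟨hx'A, hx'B, ih _ _ ((rψ₁ _ hxB _ hx'B).mp hFψ) hxC⟩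
  set U : Set X := ⋃ n, C n with hU
  set V : Set Y := B ∩ (ψ₁ ⁻¹' U) with hV
  have hUm : MeasurableSet U := MeasurableSet.iUnion hCm
  have hVm : MeasurableSet V := hBm.inter (mψ₁ hUm)
  have hUinv : Invariant E U := by
    rintro x x' hxx' hx
    obtain ⟨s, ⟨n, rfl⟩, hs⟩ := hx
    exact Set.mem_iUnion.mpr ⟨n, hCinv n _ _ hxx' hs⟩
  have hVinv : Invariant F V := by
    rintro y y' hyy' ⟨hyB, hyU⟩
    have hy'B : y' ∈ B := hBinv _ _ hyy' hyB
    exact ⟨hy'B, hUinv _ _ ((rψ₁ _ hyB _ hy'B).mp hyy') hyU⟩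
  have hnotU : ∀ x, x ∉ U → x ∈ A := by
    intro x hx
    by_contra h
    exact hx (Set.mem_iUnion.mpr ⟨0, h⟩)
  -- key negative lemmas
  have L1 : ∀ x ∈ U, ∀ x' ∉ U, ¬ F (φ₁ x) (ψ₂ x') := by
    intro x hx x' hx' hFc
    have hx'A : x' ∈ A := hnotU x' hx'
    have hψB : ψ₂ x' ∈ B := hBinv _ _ hFc (hφ₁B x)
    have hE2 : E x (ψ₁ (ψ₂ x')) :=
      hE.trans (k₁ x) ((rψ₁ _ (hφ₁B x) _ hψB).mp hFc)
    obtain ⟨n, hn⟩ := Set.mem_iUnion.mp hx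
    exact hx' (Set.mem_iUnion.mpr ⟨n + 1, ⟨hx'A, hψB, hCinv n _ _ hE2 hn⟩⟩)
  have L2 : ∀ y ∈ V, ∀ y' ∉ V, ¬ E (ψ₁ y) (φ₂ y') := by
    rintro y ⟨hyB, hyU⟩ y' hy' hEc
    obtain ⟨n, hn⟩ := Set.mem_iUnion.mp hyU
    have hφC : φ₂ y' ∈ C n := hCinv n _ _ hEc hn
    cases n with
    | zero => exact hφC (hφ₂A y')
    | succ m =>
        obtain ⟨_, hB2, hC2⟩ := hφC
        have hFy' : F y' (ψ₂ (φ₂ y')) := k₂ y'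
        have hy'B : y' ∈ B := hBinv _ _ (hF.symm hFy') hB2
        have hE3 : E (ψ₁ y') (ψ₁ (ψ₂ (φ₂ y'))) := (rψ₁ _ hy'B _ hB2).mp hFy'
        exact hy' ⟨hy'B, Set.mem_iUnion.mpr ⟨m, hCinv m _ _ (hE.symm hE3) hC2⟩⟩
  -- membership transfers
  have MU : ∀ x ∈ U, φ₁ x ∈ V := by
    intro x hx
    exact ⟨hφ₁B x, hUinv _ _ (k₁ x) hx⟩
  have MU' : ∀ x, x ∉ U → ψ₂ x ∉ V := by
    rintro x hx ⟨hψB, hψU⟩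
    obtain ⟨n, hn⟩ := Set.mem_iUnion.mp hψU
    exact hx (Set.mem_iUnion.mpr ⟨n + 1, ⟨hnotU x hx, hψB, hn⟩⟩)
  have MV' : ∀ y, y ∉ V → φ₂ y ∉ U := by
    intro y hy hφU
    obtain ⟨n, hn⟩ := Set.mem_iUnion.mp hφU
    cases n with
    | zero => exact hn (hφ₂A y)
    | succ m =>
        obtain ⟨_, hB2, hC2⟩ := hn
        have hFy : F y (ψ₂ (φ₂ y)) := k₂ y
        have hyB : y ∈ B := hBinv _ _ (hF.symm hFy) hB2
        have hE3 : E (ψ₁ y) (ψ₁ (ψ₂ (φ₂ y))) := (rψ₁ _ hyB _ hB2).mp hFy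
        exact hy ⟨hyB, Set.mem_iUnion.mpr ⟨m, hCinv m _ _ (hE.symm hE3) hC2⟩⟩
  refine ⟨U.piecewise φ₁ ψ₂, V.piecewise ψ₁ φ₂,
    Measurable.piecewise hUm mφ₁ mψ₂, Measurable.piecewise hVm mψ₁ mφ₂, ?_, ?_, ?_, ?_⟩
  · -- Φ is a reduction
    intro x x'
    by_cases hx : x ∈ U <;> by_cases hx' : x' ∈ U
    · rw [Set.piecewise_eq_of_mem _ _ _ hx, Set.piecewise_eq_of_mem _ _ _ hx']
      exact rφ₁ x x'
    · rw [Set.piecewise_eq_of_mem _ _ _ hx, Set.piecewise_eq_of_notMem _ _ _ hx']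
      exact iff_of_false (fun h => hx' (hUinv _ _ h hx)) (L1 x hx x' hx')
    · rw [Set.piecewise_eq_of_notMem _ _ _ hx, Set.piecewise_eq_of_mem _ _ _ hx']
      exact iff_of_false (fun h => hx (hUinv _ _ (hE.symm h) hx'))
        (fun h => L1 x' hx' x hx (hF.symm h))
    · rw [Set.piecewise_eq_of_notMem _ _ _ hx, Set.piecewise_eq_of_notMem _ _ _ hx']
      exact rψ₂ x (hnotU x hx) x' (hnotU x' hx')
  · -- Ψ is a reduction
    intro y y'
    by_cases hy : y ∈ V <;> by_cases hy' : y' ∈ V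
    · rw [Set.piecewise_eq_of_mem _ _ _ hy, Set.piecewise_eq_of_mem _ _ _ hy']
      exact rψ₁ y hy.1 y' hy'.1
    · rw [Set.piecewise_eq_of_mem _ _ _ hy, Set.piecewise_eq_of_notMem _ _ _ hy']
      exact iff_of_false (fun h => hy' (hVinv _ _ h hy)) (L2 y hy y' hy')
    · rw [Set.piecewise_eq_of_notMem _ _ _ hy, Set.piecewise_eq_of_mem _ _ _ hy']
      exact iff_of_false (fun h => hy (hVinv _ _ (hF.symm h) hy'))
        (fun h => L2 y' hy' y hy (hE.symm h))
    · rw [Set.piecewise_eq_of_notMem _ _ _ hy, Set.piecewise_eq_of_notMem _ _ _ hy']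
      exact rφ₂ y y'
  · -- E x (Ψ (Φ x))
    intro x
    by_cases hx : x ∈ U
    · rw [Set.piecewise_eq_of_mem _ _ _ hx, Set.piecewise_eq_of_mem _ _ _ (MU x hx)]
      exact k₁ x
    · rw [Set.piecewise_eq_of_notMem _ _ _ hx,
        Set.piecewise_eq_of_notMem _ _ _ (MU' x hx)]
      exact k₂' x (hnotU x hx)
  · -- F y (Φ (Ψ y))
    intro y
    by_cases hy : y ∈ V
    · have hmem : ψ₁ y ∈ U := hy.2
      rw [Set.piecewise_eq_of_mem _ _ _ hy, Set.piecewise_eq_of_mem _ _ _ hmem]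
      exact k₁' y hy.1
    · rw [Set.piecewise_eq_of_notMem _ _ _ hy,
        Set.piecewise_eq_of_notMem _ _ _ (MV' y hy)]
      exact k₂ y
end

section
/- The equivalence relation E₀ of eventual equality on 2^ω is invariant by comeagre subsets: for every comeagre set C ⊆ 2^ω, E₀ is Borel reducible to E₀ restricted to C. -/
open MeasureTheory

/-- Eventual equality on Cantor space. -/
def E0 (x y : ℕ → Bool) : Prop := ∀ᶠ n in Filter.atTop, x n = y n


namespace Stmt6Aux

def Cyl (w : List Bool) : Set (ℕ → Bool) := {x | ∀ i < w.length, x i = w.getD i false}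

lemma isOpen_cyl (w : List Bool) : IsOpen (Cyl w) := by
  have h : Cyl w = ⋂ i ∈ Set.Iio w.length, (fun x : ℕ → Bool => x i) ⁻¹' {w.getD i false} := by
    ext x; simp [Cyl]
  rw [h]
  exact (Set.finite_Iio _).isOpen_biInter fun i _ =>
    (continuous_apply i).isOpen_preimage _ (isOpen_discrete _)

lemma cyl_nonempty (w : List Bool) : (Cyl w).Nonempty :=
  ⟨fun i => w.getD i false, fun i _ => rfl⟩

lemma cyl_append (w e : List Bool) : Cyl (w ++ e) ⊆ Cyl w := by
  intro x hx i hi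
  have h2 : i < (w ++ e).length := by simp; omega
  have := hx i h2
  rwa [List.getD_append _ _ _ _ hi] at this

lemma exists_basic {U : Set (ℕ → Bool)} (hO : IsOpen U) {z : ℕ → Bool} (hz : z ∈ U) :
    ∃ N, ∀ y : ℕ → Bool, (∀ i < N, y i = z i) → y ∈ U := by
  obtain ⟨I, u, h1, h2⟩ := isOpen_pi_iff.mp hO z hz
  refine ⟨(I.sup id) + 1, fun y hy => h2 fun i hi => ?_⟩
  have hyi : y i = z i := hy i (Nat.lt_succ_of_le (Finset.le_sup (f := id) hi))
  rw [hyi]; exact (h1 i hi).2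

lemma dense_ext {U : Set (ℕ → Bool)} (hO : IsOpen U) (hD : Dense U) (w : List Bool) :
    ∃ e : List Bool, Cyl (w ++ e) ⊆ U := by
  obtain ⟨z, hzU, hzC⟩ := hD.exists_mem_open (isOpen_cyl w) (cyl_nonempty w)
  obtain ⟨N, hN⟩ := exists_basic hO hzU
  set e : List Bool := (List.range (N - w.length)).map (fun j => z (w.length + j)) with he
  have helen : e.length = N - w.length := by simp [he]
  have hval : ∀ j < N - w.length, e.getD j false = z (w.length + j) := by
    intro j hj
    rw [List.getD_eq_getElem _ _ (by omega)]
    simp [he]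
  refine ⟨e, fun y hy => hN y ?_⟩
  intro i hi
  rcases lt_or_ge i w.length with h | h
  · have h2 : i < (w ++ e).length := by simp; omega
    have := hy i h2
    rw [List.getD_append _ _ _ _ h] at this
    rw [this, hzC i h]
  · have hlen : i - w.length < N - w.length := by omega
    have h2 : i < (w ++ e).length := by simp [helen]; omega
    have := hy i h2
    rw [List.getD_append_right _ _ _ _ h, hval _ hlen] at this
    rw [this]
    congr 1; omega

lemma inner {U : Set (ℕ → Bool)} (hO : IsOpen U) (hD : Dense U) (ps : List (List Bool)) :
    ∃ e : List Bool, ∀ p ∈ ps, ∀ β : Bool, Cyl (p ++ β :: e) ⊆ U := by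
  induction ps with
  | nil => exact ⟨[], by simp⟩
  | cons p rest ih =>
    obtain ⟨e, he⟩ := ih
    obtain ⟨e₁, he₁⟩ := dense_ext hO hD (p ++ true :: e)
    obtain ⟨e₂, he₂⟩ := dense_ext hO hD (p ++ false :: (e ++ e₁))
    refine ⟨e ++ e₁ ++ e₂, ?_⟩
    rintro q hq β
    rcases List.mem_cons.mp hq with hq | hq
    · subst hq
      cases β
      · intro x hx
        exact he₂ (by simpa [List.append_assoc] using hx)
      · intro x hx
        apply he₁
        have : x ∈ Cyl ((q ++ true :: e ++ e₁) ++ e₂) := by simpa [List.append_assoc] using hx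
        have := cyl_append (q ++ true :: e ++ e₁) e₂ this
        simpa [List.append_assoc] using this
    · intro x hx
      apply he q hq β
      have : x ∈ Cyl ((q ++ β :: e) ++ (e₁ ++ e₂)) := by simpa [List.append_assoc] using hx
      exact cyl_append _ _ this


section Build

variable (U : ℕ → Set (ℕ → Bool)) (hO : ∀ n, IsOpen (U n)) (hD : ∀ n, Dense (U n))

noncomputable def build : ℕ → List (List Bool) × List Bool
  | 0 => ([([] : List Bool)], (inner (hO 0) (hD 0) [[]]).choose)
  | n + 1 =>
    let b := build n
    let P := b.1.flatMap fun p => [p ++ true :: b.2, p ++ false :: b.2]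
    (P, (inner (hO (n+1)) (hD (n+1)) P).choose)

noncomputable def eb (n : ℕ) : List Bool := (build U hO hD n).2
noncomputable def Ps (n : ℕ) : List (List Bool) := (build U hO hD n).1

lemma Ps_succ (n : ℕ) : Ps U hO hD (n+1) =
    (Ps U hO hD n).flatMap fun p => [p ++ true :: eb U hO hD n, p ++ false :: eb U hO hD n] :=
  rfl

lemma key (n : ℕ) : ∀ p ∈ Ps U hO hD n, ∀ β : Bool, Cyl (p ++ β :: eb U hO hD n) ⊆ U n := by
  cases n with
  | zero => exact (inner (hO 0) (hD 0) [[]]).choose_spec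
  | succ n => exact (inner (hO (n+1)) (hD (n+1)) _).choose_spec

noncomputable def pref (x : ℕ → Bool) : ℕ → List Bool
  | 0 => []
  | n + 1 => pref x n ++ (x n :: eb U hO hD n)

noncomputable def Lf : ℕ → ℕ
  | 0 => 0
  | n + 1 => Lf n + ((eb U hO hD n).length + 1)

lemma length_pref (x : ℕ → Bool) (n : ℕ) : (pref U hO hD x n).length = Lf U hO hD n := by
  induction n with
  | zero => rfl
  | succ n ih => simp [pref, Lf, ih]

lemma Lf_lt (n : ℕ) : Lf U hO hD n < Lf U hO hD (n+1) := by
  simp [Lf]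

lemma Lf_strictMono : StrictMono (Lf U hO hD) :=
  strictMono_nat_of_lt_succ (Lf_lt U hO hD)

lemma le_Lf (n : ℕ) : n ≤ Lf U hO hD n := by
  induction n with
  | zero => exact Nat.zero_le _
  | succ n ih => have := Lf_lt U hO hD n; omega

lemma pref_append (x : ℕ → Bool) {k k' : ℕ} (h : k ≤ k') :
    ∃ t, pref U hO hD x k' = pref U hO hD x k ++ t := by
  induction k' with
  | zero =>
    have hk : k = 0 := Nat.le_zero.mp h
    subst hk; exact ⟨[], by simp⟩
  | succ k' ih =>
    rcases Nat.lt_or_ge k (k'+1) with h2 | h2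
    · obtain ⟨t, ht⟩ := ih (by omega)
      exact ⟨t ++ (x k' :: eb U hO hD k'), by simp [pref, ht]⟩
    · have : k = k' + 1 := by omega
      subst this; exact ⟨[], by simp⟩

lemma getD_pref_stable (x : ℕ → Bool) {m k k' : ℕ} (h1 : m < Lf U hO hD k) (h2 : k ≤ k') :
    (pref U hO hD x k').getD m false = (pref U hO hD x k).getD m false := by
  obtain ⟨t, ht⟩ := pref_append U hO hD x h2
  rw [ht, List.getD_append _ _ _ _ (by rw [length_pref]; exact h1)]

noncomputable def ff (x : ℕ → Bool) (m : ℕ) : Bool := (pref U hO hD x (m+1)).getD m false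

lemma ff_eq (x : ℕ → Bool) {m k : ℕ} (h : m < Lf U hO hD k) :
    ff U hO hD x m = (pref U hO hD x k).getD m false := by
  rcases le_total k (m+1) with h2 | h2
  · exact getD_pref_stable U hO hD x h h2
  · have hm : m < Lf U hO hD (m+1) := lt_of_lt_of_le (Nat.lt_succ_self m) (le_Lf U hO hD (m+1))
    exact (getD_pref_stable U hO hD x hm h2).symm

lemma ff_mem_cyl (x : ℕ → Bool) (k : ℕ) : ff U hO hD x ∈ Cyl (pref U hO hD x k) := by
  intro m hm
  rw [length_pref] at hm
  exact ff_eq U hO hD x hm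

lemma pref_mem_Ps (x : ℕ → Bool) (n : ℕ) : pref U hO hD x n ∈ Ps U hO hD n := by
  induction n with
  | zero => simp [pref, Ps, build]
  | succ n ih =>
    rw [Ps_succ, List.mem_flatMap]
    exact ⟨pref U hO hD x n, ih, by cases hx : x n <;> simp [pref, hx]⟩

lemma ff_at_block (x : ℕ → Bool) (n : ℕ) : ff U hO hD x (Lf U hO hD n) = x n := by
  rw [ff_eq U hO hD x (Lf_lt U hO hD n)]
  show (pref U hO hD x n ++ (x n :: eb U hO hD n)).getD (Lf U hO hD n) false = x n
  rw [List.getD_append_right _ _ _ _ (by rw [length_pref])]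
  simp [length_pref]

lemma ff_agree (x y : ℕ → Bool) (N : ℕ) (hxy : ∀ i, N ≤ i → x i = y i) :
    ∀ m, Lf U hO hD N ≤ m → ff U hO hD x m = ff U hO hD y m := by
  intro m hm
  have main : ∀ k, (pref U hO hD x k).getD m false = (pref U hO hD y k).getD m false := by
    intro k
    induction k with
    | zero => rfl
    | succ k ih =>
      show (pref U hO hD x k ++ (x k :: eb U hO hD k)).getD m false
          = (pref U hO hD y k ++ (y k :: eb U hO hD k)).getD m false
      rcases lt_or_ge m (Lf U hO hD k) with h | h
      · rw [List.getD_append _ _ _ _ (by rw [length_pref]; exact h),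
          List.getD_append _ _ _ _ (by rw [length_pref]; exact h)]
        exact ih
      · rw [List.getD_append_right _ _ _ _ (by rw [length_pref]; exact h),
          List.getD_append_right _ _ _ _ (by rw [length_pref]; exact h)]
        simp only [length_pref]
        by_cases hk : N ≤ k
        · rw [hxy k hk]
        · have hlt : Lf U hO hD k < Lf U hO hD N :=
            Lf_strictMono U hO hD (by omega)
          have hpos : 1 ≤ m - Lf U hO hD k := by omega
          obtain ⟨j, hj⟩ : ∃ j, m - Lf U hO hD k = j + 1 := ⟨m - Lf U hO hD k - 1, by omega⟩
          rw [hj]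
          simp
  show (pref U hO hD x (m+1)).getD m false = (pref U hO hD y (m+1)).getD m false
  exact main (m+1)

lemma pref_congr (x y : ℕ → Bool) (n : ℕ) (h : ∀ i < n, x i = y i) :
    pref U hO hD x n = pref U hO hD y n := by
  induction n with
  | zero => rfl
  | succ n ih =>
    show pref U hO hD x n ++ _ = pref U hO hD y n ++ _
    rw [ih (fun i hi => h i (by omega)), h n (by omega)]

lemma ff_measurable : Measurable (ff U hO hD) := by
  apply measurable_pi_lambda
  intro m
  have hrw : (fun x => ff U hO hD x m) =
      (fun v : Fin (m+1) → Bool =>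
        (pref U hO hD (fun i => if h : i < m+1 then v ⟨i, h⟩ else false) (m+1)).getD m false) ∘
      (fun x (i : Fin (m+1)) => x i) := by
    funext x
    simp only [Function.comp_apply, ff]
    congr 1
    exact pref_congr U hO hD x _ (m+1) (fun i hi => by simp [hi])
  rw [hrw]
  exact (measurable_of_countable _).comp (measurable_pi_lambda _ fun i => measurable_pi_apply _)

end Build

end Stmt6Aux

/-- `E₀` is invariant by comeagre subsets: for every comeagre `C ⊆ 2^ω`,
`E₀ ≤_B E₀↾C`. -/
theorem stmt_6 (C : Set (ℕ → Bool)) (hC : C ∈ residual (ℕ → Bool)) :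
    ∃ f : (ℕ → Bool) → (ℕ → Bool), Measurable f ∧ (∀ x, f x ∈ C) ∧
      IsReduction f E0 E0 := by
  obtain ⟨S, hSo, hSd, hSc, hSsub⟩ := mem_residual_iff.mp hC
  obtain ⟨u, hu⟩ := (hSc.insert Set.univ).exists_eq_range ⟨Set.univ, Set.mem_insert _ _⟩
  have hO : ∀ n, IsOpen (u n) := by
    intro n
    have hn : u n ∈ insert Set.univ S := by rw [hu]; exact Set.mem_range_self n
    rcases Set.mem_insert_iff.mp hn with h | h
    · rw [h]; exact isOpen_univ
    · exact hSo _ h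
  have hD : ∀ n, Dense (u n) := by
    intro n
    have hn : u n ∈ insert Set.univ S := by rw [hu]; exact Set.mem_range_self n
    rcases Set.mem_insert_iff.mp hn with h | h
    · rw [h]; exact dense_univ
    · exact hSd _ h
  have hsub : (⋂ n, u n) ⊆ C := by
    intro x hx
    apply hSsub
    intro t ht
    have hmem : t ∈ Set.range u := by rw [← hu]; exact Set.mem_insert_of_mem _ ht
    obtain ⟨n, rfl⟩ := hmem
    exact Set.mem_iInter.mp hx n
  refine ⟨Stmt6Aux.ff u hO hD, Stmt6Aux.ff_measurable u hO hD, ?_, ?_⟩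
  · intro x
    apply hsub
    refine Set.mem_iInter.mpr fun n => ?_
    exact Stmt6Aux.key u hO hD n _ (Stmt6Aux.pref_mem_Ps u hO hD x n) (x n)
      (Stmt6Aux.ff_mem_cyl u hO hD x (n+1))
  · intro x y
    simp only [E0, Filter.eventually_atTop]
    constructor
    · rintro ⟨N, hN⟩
      exact ⟨Stmt6Aux.Lf u hO hD N, fun m hm =>
        Stmt6Aux.ff_agree u hO hD x y N (fun i hi => hN i hi) m hm⟩
    · rintro ⟨M, hM⟩
      refine ⟨M, fun n hn => ?_⟩
      have h1 : M ≤ Stmt6Aux.Lf u hO hD n := le_trans hn (Stmt6Aux.le_Lf u hO hD n)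
      have h2 := hM _ h1
      rwa [Stmt6Aux.ff_at_block, Stmt6Aux.ff_at_block] at h2
end

section
/- Let T be the set-theoretical tree ω^{<ω} of finite sequences of natural numbers ordered by extension, and define rp(s) for nonempty s as the pair (s(n), s(m)) where |s| = ⟨n,m⟩ + 1 for a fixed pairing bijection ⟨·,·⟩ with n, m ≤ ⟨n,m⟩, and s^E = ⟨s(2i) : 2i < |s|⟩. Then for every s, t ∈ ω^{<ω} there exists v ∈ ω^{<ω} extending t with |v| even and rp(v^E) = rp(s^E). -/
open MeasureTheory

/-- The subsequence of entries of `s` at even positions (`s^E`). -/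
def evenPart (s : List ℕ) : List ℕ :=
  ((List.range s.length).filter (fun i => i % 2 = 0)).map (fun i => s.getD i 0)

/-- The relevant pair of `s` (w.r.t. a pairing bijection `e`): `(s(n), s(m))` where
`⟨n,m⟩ + 1 = |s|`. -/
def rp (e : ℕ × ℕ ≃ ℕ) (s : List ℕ) : ℕ × ℕ :=
  (s.getD (e.symm (s.length - 1)).1 0, s.getD (e.symm (s.length - 1)).2 0)


lemma filter_range_even (L : ℕ) :
    (List.range (2*L)).filter (fun i => decide (i % 2 = 0)) = (List.range L).map (2*·) := by
  induction L with
  | zero => simp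
  | succ L ih =>
    have h2 : 2 * (L + 1) = (2*L + 1) + 1 := by ring
    rw [h2, List.range_succ, List.range_succ, List.filter_append, List.filter_append, ih,
      List.range_succ, List.map_append]
    simp only [List.filter_cons, List.filter_nil, decide_eq_true_eq]
    rw [if_pos (by omega), if_neg (by omega)]
    simp [Nat.mul_comm]

lemma evenPart_of_len (v : List ℕ) (L : ℕ) (hv : v.length = 2*L) :
    evenPart v = (List.range L).map (fun i => v.getD (2*i) 0) := by
  rw [evenPart, hv, filter_range_even, List.map_map]
  rfl

/-- for a pairing bijection `⟨·,·⟩` with `n, m ≤ ⟨n,m⟩`, for all finite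
sequences `s ≠ ∅` and `t` there is `v ⊇ t` of even length with `rp(v^E) = rp(s^E)`. -/
theorem stmt_15 (e : ℕ × ℕ ≃ ℕ) (he : ∀ n m : ℕ, n ≤ e (n, m) ∧ m ≤ e (n, m))
    (s t : List ℕ) (hs : s ≠ []) :
    ∃ v : List ℕ, t <+: v ∧ Even v.length ∧ rp e (evenPart v) = rp e (evenPart s) := by
  set a := (evenPart s).getD (e.symm ((evenPart s).length - 1)).1 0 with ha
  set b := (evenPart s).getD (e.symm ((evenPart s).length - 1)).2 0 with hb
  set n := t.length with hn
  set m := t.length + 1 with hm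
  set L := e (n, m) + 1 with hL
  have hnL : n < L := Nat.lt_succ_of_le (he n m).1
  have hmL : m < L := Nat.lt_succ_of_le (he n m).2
  set f : Fin (2*L) → ℕ := fun i =>
    if h : (i:ℕ) < t.length then t.get ⟨i, h⟩
    else if (i:ℕ) = 2*n then a else if (i:ℕ) = 2*m then b else 0 with hf
  set v : List ℕ := List.ofFn f with hv
  have hvlen : v.length = 2*L := by rw [hv, List.length_ofFn]
  have htlen : t.length ≤ 2*L := le_trans (Nat.le_of_lt hnL) (by omega)
  refine ⟨v, ?_, ?_, ?_⟩
  · rw [List.prefix_iff_eq_take]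
    apply List.ext_getElem
    · rw [List.length_take, hvlen]; omega
    · intro i h1 h2
      have hi2 : i < 2*L := lt_of_lt_of_le h1 htlen
      rw [List.getElem_take]
      simp only [hv, List.getElem_ofFn, hf]
      rw [dif_pos h1]
      rfl
  · exact hvlen ▸ ⟨L, two_mul L⟩
  · have hep : evenPart v = (List.range L).map (fun i => v.getD (2*i) 0) :=
      evenPart_of_len v L hvlen
    have heplen : (evenPart v).length = L := by rw [hep]; simp
    have hgetD : ∀ k, k < L → (evenPart v).getD k 0 = v.getD (2*k) 0 := by
      intro k hk
      rw [hep, List.getD_eq_getElem _ _ (by simpa using hk)]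
      simp
    have hvget : ∀ k, ∀ hk : k < L, v.getD (2*k) 0 = f ⟨2*k, by omega⟩ := by
      intro k hk
      rw [List.getD_eq_getElem _ _ (by rw [hvlen]; omega)]
      simp only [hv, List.getElem_ofFn]
    have hL1 : L - 1 = e (n, m) := by omega
    have hsymm : e.symm (L - 1) = (n, m) := by rw [hL1, Equiv.symm_apply_apply]
    have hva : v.getD (2*n) 0 = a := by
      rw [hvget n hnL]
      simp only [hf]
      rw [dif_neg (by omega)]
      simp
    have hvb : v.getD (2*m) 0 = b := by
      rw [hvget m hmL]
      simp only [hf]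
      rw [dif_neg (by omega), if_neg (by omega)]
      simp
    rw [rp, heplen, hsymm]
    rw [hgetD n hnL, hgetD m hmL, hva, hvb]
    rfl
end
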